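/- There exists an absolute constant K ≥ 1 with the following property: for every square-summable sequence c⁰ : ℤ → [0,∞) there exists a sequence c : ℤ → [0,∞) such that (i) c⁰_k ≤ c_k for every k ∈ ℤ, (ii) ‖c‖_{ℓ²(ℤ)} ≤ K · ‖c⁰‖_{ℓ²(ℤ)}, and (iii) (Mc)_k ≤ K · c_k for every k ∈ ℤ. (In the paper's terminology: every ℓ² frequency envelope can be placed under a comparable admissible envelope satisfying the maximal property.) -/

import Mathlib

/-!
The centered maximal operator `M` on `ℤ` is bounded on `ℓ²`: a Vitali covering argument gives
the weak type estimate `#{M f > s} · s ≤ 3 ‖f‖₁`, applied to the part of `f` above `s / 2`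
(the rest contributes at most `s / 2` to `M f`), and integrating over the levels `s` gives
`‖M f‖₂² ≤ 24 ‖f‖₂²`.

The envelope is then produced by the Rubio de Francia algorithm: `c = ∑ᵢ (2A)⁻ⁱ Mⁱ c⁰` with
`A = 24`. Its `ℓ²` norm is controlled by the geometric series `∑ᵢ (2A)⁻ⁱ Aⁱ`, it dominates its
`i = 0` term `c⁰`, and since `M` commutes with nonnegative series up to `≤`, `M c ≤ 2A c`.
-/

open scoped ENNReal
open MeasureTheory Set

lemma ENNReal.mul_le_sq_add_sq (x y : ℝ≥0∞) : x * y ≤ x ^ 2 + y ^ 2 := by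
  rcases le_total x y with h | h
  · exact (mul_le_mul_left h y).trans ((sq y).ge.trans le_add_self)
  · exact (mul_le_mul_right h x).trans ((sq x).ge.trans le_self_add)

lemma ENNReal.sq_tsum_mul_le {ι : Type*} (a x : ι → ℝ≥0∞) :
    (∑' i, a i * x i) ^ 2 ≤ 2 * (∑' i, a i) * ∑' i, a i * x i ^ 2 :=
  calc (∑' i, a i * x i) ^ 2 = ∑' i, ∑' j, a i * a j * (x i * x j) := by
        rw [sq, ← ENNReal.tsum_mul_right]
        refine tsum_congr fun i => ?_
        rw [← ENNReal.tsum_mul_left]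
        exact tsum_congr fun j => by ring
    _ ≤ ∑' i, ∑' j, (a i * x i ^ 2 * a j + a i * (a j * x j ^ 2)) := by
        gcongr with i j
        calc a i * a j * (x i * x j) ≤ a i * a j * (x i ^ 2 + x j ^ 2) := by
              gcongr; exact ENNReal.mul_le_sq_add_sq _ _
          _ = _ := by ring
    _ = 2 * (∑' i, a i) * ∑' i, a i * x i ^ 2 := by
        simp only [ENNReal.tsum_add, ENNReal.tsum_mul_left, ENNReal.tsum_mul_right]
        ring

section RubioDeFrancia

variable {ι : Type*} (T : (ι → ℝ≥0∞) → ι → ℝ≥0∞) (A : ℝ≥0∞)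

noncomputable def rubioDeFrancia (f : ι → ℝ≥0∞) (k : ι) : ℝ≥0∞ :=
  ∑' i, (2 * A)⁻¹ ^ i * T^[i] f k

lemma le_rubioDeFrancia (f : ι → ℝ≥0∞) : f ≤ rubioDeFrancia T A f := fun k => by
  simpa [rubioDeFrancia] using ENNReal.le_tsum (f := fun i => (2 * A)⁻¹ ^ i * T^[i] f k) 0

variable {T A}

lemma tsum_iterate_sq_le (hT : ∀ f, ∑' k, T f k ^ 2 ≤ A * ∑' k, f k ^ 2) (f : ι → ℝ≥0∞)
    (i : ℕ) : ∑' k, T^[i] f k ^ 2 ≤ A ^ i * ∑' k, f k ^ 2 := by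
  induction i with
  | zero => simp
  | succ i ih => calc
      ∑' k, T^[i + 1] f k ^ 2 ≤ A * ∑' k, T^[i] f k ^ 2 := by
        rw [Function.iterate_succ_apply']; exact hT _
      _ ≤ A ^ (i + 1) * ∑' k, f k ^ 2 := by
        rw [pow_succ', mul_assoc]; exact mul_le_mul_right ih A

lemma tsum_rubioDeFrancia_sq_le (hA : 1 ≤ A) (hA_top : A ≠ ⊤)
    (hT : ∀ f, ∑' k, T f k ^ 2 ≤ A * ∑' k, f k ^ 2) (f : ι → ℝ≥0∞) :
    ∑' k, rubioDeFrancia T A f k ^ 2 ≤ 8 * ∑' k, f k ^ 2 := by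
  have hweight_mul (i : ℕ) : (2 * A)⁻¹ ^ i * A ^ i = 2⁻¹ ^ i := by
    rw [← mul_pow, ENNReal.mul_inv (by simp) (by simp), mul_assoc,
      ENNReal.inv_mul_cancel (by positivity) hA_top, mul_one]
  calc ∑' k, rubioDeFrancia T A f k ^ 2
      ≤ ∑' k, 2 * (∑' i, (2 * A)⁻¹ ^ i) * ∑' i, (2 * A)⁻¹ ^ i * T^[i] f k ^ 2 :=
        ENNReal.tsum_le_tsum fun k => ENNReal.sq_tsum_mul_le _ _
    _ = 2 * (∑' i, (2 * A)⁻¹ ^ i) * ∑' i, (2 * A)⁻¹ ^ i * ∑' k, T^[i] f k ^ 2 := by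
        rw [ENNReal.tsum_mul_left, ENNReal.tsum_comm]
        simp only [ENNReal.tsum_mul_left]
    _ ≤ 2 * (∑' i : ℕ, 2⁻¹ ^ i) * ∑' i, (2 * A)⁻¹ ^ i * (A ^ i * ∑' k, f k ^ 2) := by
        gcongr with i
        exacts [by simpa using mul_le_mul_right hA 2, tsum_iterate_sq_le hT f i]
    _ = 8 * ∑' k, f k ^ 2 := by
        simp only [← mul_assoc, hweight_mul, ENNReal.tsum_mul_right, ENNReal.tsum_geometric,
          ENNReal.one_sub_inv_two, inv_inv]
        ring

lemma apply_rubioDeFrancia_le (hA : A ≠ 0) (hA_top : A ≠ ⊤)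
    (hT : ∀ (a : ℕ → ℝ≥0∞) (x : ℕ → ι → ℝ≥0∞) (k : ι),
      T (fun l => ∑' i, a i * x i l) k ≤ ∑' i, a i * T (x i) k)
    (f : ι → ℝ≥0∞) (k : ι) :
    T (rubioDeFrancia T A f) k ≤ 2 * A * rubioDeFrancia T A f k := by
  have hweight (i : ℕ) : (2 * A)⁻¹ ^ i = 2 * A * (2 * A)⁻¹ ^ (i + 1) := by
    rw [pow_succ', ← mul_assoc, ENNReal.mul_inv_cancel (by simp [hA]) (by finiteness), one_mul]
  calc T (rubioDeFrancia T A f) k ≤ ∑' i, (2 * A)⁻¹ ^ i * T (T^[i] f) k := hT _ _ k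
    _ = 2 * A * ∑' i, (2 * A)⁻¹ ^ (i + 1) * T^[i + 1] f k := by
        rw [← ENNReal.tsum_mul_left]
        exact tsum_congr fun i => by rw [Function.iterate_succ_apply', hweight, mul_assoc]
    _ ≤ 2 * A * rubioDeFrancia T A f k :=
        mul_le_mul_right (ENNReal.tsum_comp_le_tsum_of_injective (add_left_injective 1)
          fun i => (2 * A)⁻¹ ^ i * T^[i] f k) _

end RubioDeFrancia

lemma lintegral_indicator_half_lt_le (x : ℝ≥0∞) :
    ∫⁻ t in Ioi (0 : ℝ), {t : ℝ | ENNReal.ofReal (t / 2) < x}.indicator (fun _ => x) t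
      ≤ 2 * x ^ 2 := by
  rcases eq_or_ne x ⊤ with rfl | hx
  · simp [ENNReal.top_pow, ENNReal.mul_top]
  have hS : MeasurableSet {t : ℝ | ENNReal.ofReal (t / 2) < x} :=
    measurableSet_lt (by fun_prop) measurable_const
  have hset : {t | ENNReal.ofReal (t / 2) < x} ∩ Ioi (0 : ℝ) ⊆ Ioo 0 (2 * x.toReal) :=
    fun t ⟨htx, ht0⟩ => ⟨ht0, by
      rw [mem_ofPred_eq, ENNReal.ofReal_lt_iff_lt_toReal (by simp at ht0; positivity) hx] at htx
      linarith⟩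
  calc ∫⁻ t in Ioi (0 : ℝ), {t : ℝ | ENNReal.ofReal (t / 2) < x}.indicator (fun _ => x) t
      = x * volume ({t | ENNReal.ofReal (t / 2) < x} ∩ Ioi (0 : ℝ)) := by
        rw [← Measure.restrict_apply hS, ← lintegral_indicator_const hS]
    _ ≤ x * volume (Ioo 0 (2 * x.toReal)) := by gcongr
    _ = 2 * x ^ 2 := by
        rw [Real.volume_Ioo, sub_zero, ENNReal.ofReal_mul zero_le_two, ENNReal.ofReal_toReal hx]
        simp; ring

namespace IntMaximal

noncomputable def windowAvg (j : ℕ) (f : ℤ → ℝ≥0∞) (k : ℤ) : ℝ≥0∞ :=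
  ((2 * j + 1 : ℕ) : ℝ≥0∞)⁻¹ * ∑ l ∈ Finset.Icc (k - j) (k + j), f l

noncomputable def maximalFn (f : ℤ → ℝ≥0∞) (k : ℤ) : ℝ≥0∞ := ⨆ j, windowAvg j f k

lemma card_window (k : ℤ) (j : ℕ) : (Finset.Icc (k - j) (k + j)).card = 2 * j + 1 := by
  rw [Int.card_Icc]; omega

lemma windowAvg_mono {f g : ℤ → ℝ≥0∞} (h : f ≤ g) (j : ℕ) (k : ℤ) :
    windowAvg j f k ≤ windowAvg j g k :=
  mul_le_mul_right (Finset.sum_le_sum fun l _ => h l) _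

lemma windowAvg_add (j : ℕ) (f g : ℤ → ℝ≥0∞) (k : ℤ) :
    windowAvg j (f + g) k = windowAvg j f k + windowAvg j g k := by
  simp only [windowAvg, Pi.add_apply, Finset.sum_add_distrib, mul_add]

lemma windowAvg_const (j : ℕ) (c : ℝ≥0∞) (k : ℤ) : windowAvg j (fun _ => c) k = c := by
  rw [windowAvg, Finset.sum_const, card_window, nsmul_eq_mul, ← mul_assoc,
    ENNReal.inv_mul_cancel (by simp) (ENNReal.natCast_ne_top _), one_mul]

lemma windowAvg_tsum_mul (j : ℕ) (a : ℕ → ℝ≥0∞) (x : ℕ → ℤ → ℝ≥0∞) (k : ℤ) :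
    windowAvg j (fun l => ∑' i, a i * x i l) k = ∑' i, a i * windowAvg j (x i) k := by
  simp only [windowAvg, ← ENNReal.tsum_mul_left, Finset.mul_sum]
  rw [← Summable.tsum_finsetSum fun _ _ => ENNReal.summable]
  refine tsum_congr fun i => Finset.sum_congr rfl fun l _ => by ring

lemma windowAvg_le_maximalFn (j : ℕ) (f : ℤ → ℝ≥0∞) (k : ℤ) :
    windowAvg j f k ≤ maximalFn f k :=
  le_iSup (fun j => windowAvg j f k) j

lemma maximalFn_le_of_le {f : ℤ → ℝ≥0∞} {C : ℝ≥0∞} (h : ∀ l, f l ≤ C) (k : ℤ) :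
    maximalFn f k ≤ C :=
  iSup_le fun j => (windowAvg_mono h j k).trans (windowAvg_const j C k).le

lemma maximalFn_ne_top {f : ℤ → ℝ≥0∞} (hf : ∑' l, f l ^ 2 ≠ ⊤) (k : ℤ) :
    maximalFn f k ≠ ⊤ := by
  refine ne_top_of_le_ne_top (ENNReal.add_ne_top.2 ⟨ENNReal.one_ne_top, hf⟩)
    (maximalFn_le_of_le (fun l => ?_) k)
  rcases le_total (f l) 1 with h | h
  · exact h.trans le_self_add
  · calc f l ≤ f l ^ 2 := by simpa [sq] using mul_le_mul_right h (f l)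
      _ ≤ 1 + ∑' l, f l ^ 2 := (ENNReal.le_tsum l).trans le_add_self

lemma maximalFn_tsum_mul_le (a : ℕ → ℝ≥0∞) (x : ℕ → ℤ → ℝ≥0∞) (k : ℤ) :
    maximalFn (fun l => ∑' i, a i * x i l) k ≤ ∑' i, a i * maximalFn (x i) k :=
  iSup_le fun j => (windowAvg_tsum_mul j a x k).trans_le <|
    ENNReal.tsum_le_tsum fun i => mul_le_mul_right (windowAvg_le_maximalFn j (x i) k) _

lemma maximalFn_le_maximalFn_indicator_add (f : ℤ → ℝ≥0∞) (s : ℝ≥0∞) (k : ℤ) :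
    maximalFn f k ≤ maximalFn ({l | s < f l}.indicator f) k + s := by
  refine iSup_le fun j => ?_
  have hf : f ≤ {l | s < f l}.indicator f + fun _ => s := fun l => by
    by_cases hl : s < f l
    · simp [hl]
    · simpa [hl] using not_lt.1 hl
  calc windowAvg j f k ≤ windowAvg j ({l | s < f l}.indicator f + fun _ => s) k :=
        windowAvg_mono hf j k
    _ = windowAvg j ({l | s < f l}.indicator f) k + s := by
        rw [windowAvg_add, windowAvg_const]
    _ ≤ _ := add_le_add_left (windowAvg_le_maximalFn j _ k) s

lemma exists_pairwiseDisjoint_Icc_subcover (s : Finset ℤ) (r : ℤ → ℕ) :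
    ∃ u ⊆ s, (u : Set ℤ).PairwiseDisjoint (fun b => Finset.Icc (b - r b) (b + r b)) ∧
      s ⊆ u.biUnion fun b => Finset.Icc (b - 3 * r b) (b + 3 * r b) := by
  obtain ⟨u, hus, hdisj, hcov⟩ := Vitali.exists_disjoint_subfamily_covering_enlargement
    (fun b => (Finset.Icc (b - r b) (b + r b) : Set ℤ)) s (fun b => (r b : ℝ)) 2 one_lt_two
    (fun _ _ => Nat.cast_nonneg _) ((s.sup r : ℕ) : ℝ)
    (fun b hb => Nat.cast_le.2 (Finset.le_sup hb))
    (fun b _ => ⟨b, by simp⟩)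
  lift u to Finset ℤ using s.finite_toSet.subset hus
  refine ⟨u, Finset.coe_subset.1 hus,
    fun a ha b hb hab => Finset.disjoint_coe.1 (hdisj ha hb hab), fun a ha => ?_⟩
  obtain ⟨b, hb, ⟨l, hla, hlb⟩, hrab⟩ := hcov a ha
  simp only [Finset.coe_Icc, mem_Icc] at hla hlb
  have : r a ≤ 2 * r b := by exact_mod_cast hrab
  exact Finset.mem_biUnion.2 ⟨b, hb, Finset.mem_Icc.2 (by omega)⟩

lemma card_mul_le_of_lt_maximalFn (f : ℤ → ℝ≥0∞) (t : ℝ≥0∞) (s : Finset ℤ)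
    (hs : ∀ k ∈ s, t < maximalFn f k) :
    s.card * t ≤ 3 * ∑' l, f l := by
  have hex : ∀ k, ∃ j : ℕ, k ∈ s → (2 * j + 1 : ℕ) * t < ∑ l ∈ Finset.Icc (k - j) (k + j), f l := by
    intro k
    by_cases hk : k ∈ s
    · obtain ⟨j, hj⟩ := lt_iSup_iff.1 (hs k hk)
      refine ⟨j, fun _ => ?_⟩
      exact ENNReal.mul_lt_of_lt_div' (by rwa [windowAvg, mul_comm, ← div_eq_mul_inv] at hj)
    · exact ⟨0, fun h => absurd h hk⟩
  choose r hr using hex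
  obtain ⟨u, hus, hdisj, hcov⟩ := exists_pairwiseDisjoint_Icc_subcover s r
  have hcard : s.card ≤ ∑ b ∈ u, 3 * (2 * r b + 1) := calc
    s.card ≤ (u.biUnion fun b => Finset.Icc (b - 3 * r b) (b + 3 * r b)).card :=
        Finset.card_le_card hcov
    _ ≤ ∑ b ∈ u, (Finset.Icc (b - 3 * r b) (b + 3 * r b)).card := Finset.card_biUnion_le
    _ ≤ ∑ b ∈ u, 3 * (2 * r b + 1) := Finset.sum_le_sum fun b _ => by
        rw [Int.card_Icc]; omega
  calc s.card * t ≤ (∑ b ∈ u, 3 * (2 * r b + 1) : ℕ) * t := by gcongr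
    _ = 3 * ∑ b ∈ u, (2 * r b + 1 : ℕ) * t := by
        push_cast; rw [Finset.sum_mul, Finset.mul_sum]; simp only [mul_assoc]
    _ ≤ 3 * ∑ b ∈ u, ∑ l ∈ Finset.Icc (b - r b) (b + r b), f l := by
        gcongr with b hb; exact (hr b (hus hb)).le
    _ = 3 * ∑ l ∈ u.biUnion fun b => Finset.Icc (b - r b) (b + r b), f l := by
        rw [Finset.sum_biUnion hdisj]
    _ ≤ 3 * ∑' l, f l := by gcongr; exact ENNReal.sum_le_tsum _

lemma count_lt_maximalFn_mul_le (f : ℤ → ℝ≥0∞) (t : ℝ≥0∞) :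
    Measure.count {k | t < maximalFn f k} * t ≤ 3 * ∑' l, f l := by
  classical
  rw [← lintegral_indicator_one (by measurability), lintegral_count, ENNReal.tsum_eq_iSup_sum,
    ENNReal.iSup_mul]
  refine iSup_le fun s => ?_
  rw [Finset.sum_indicator_eq_sum_filter]
  simp only [Pi.one_apply, Finset.sum_const, nsmul_one]
  exact card_mul_le_of_lt_maximalFn f t _ fun k hk => (Finset.mem_filter.1 hk).2

lemma count_add_lt_maximalFn_mul_le (f : ℤ → ℝ≥0∞) {s : ℝ≥0∞} (hs : s ≠ ⊤) :
    Measure.count {k | s + s < maximalFn f k} * s ≤ 3 * ∑' l, {l | s < f l}.indicator f l := by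
  refine le_trans (mul_le_mul_left (measure_mono fun k hk => ?_) s)
    (count_lt_maximalFn_mul_le _ s)
  exact (ENNReal.add_lt_add_iff_right hs).1
    (lt_of_lt_of_le hk (maximalFn_le_maximalFn_indicator_add f s k))

lemma count_lt_toReal_maximalFn_mul_le {f : ℤ → ℝ≥0∞} (hf : ∀ k, maximalFn f k ≠ ⊤) {t : ℝ}
    (ht : 0 ≤ t) :
    Measure.count {k | t < (maximalFn f k).toReal} * ENNReal.ofReal t
      ≤ 6 * ∑' l, {t : ℝ | ENNReal.ofReal (t / 2) < f l}.indicator (fun _ => f l) t := by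
  have hhalf : ENNReal.ofReal t = ENNReal.ofReal (t / 2) + ENNReal.ofReal (t / 2) := by
    rw [← ENNReal.ofReal_add (by positivity) (by positivity), add_halves]
  have hset : {k | t < (maximalFn f k).toReal}
      = {k | ENNReal.ofReal (t / 2) + ENNReal.ofReal (t / 2) < maximalFn f k} := by
    ext k
    rw [mem_ofPred_eq, mem_ofPred_eq, ← hhalf, ENNReal.ofReal_lt_iff_lt_toReal ht (hf k)]
  calc Measure.count {k | t < (maximalFn f k).toReal} * ENNReal.ofReal t
      = 2 * (Measure.count {k | ENNReal.ofReal (t / 2) + ENNReal.ofReal (t / 2)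
          < maximalFn f k} * ENNReal.ofReal (t / 2)) := by
        rw [hset, hhalf, ← two_mul]
        ring
    _ ≤ 2 * (3 * ∑' l, {l | ENNReal.ofReal (t / 2) < f l}.indicator f l) :=
        mul_le_mul_right (count_add_lt_maximalFn_mul_le f ENNReal.ofReal_ne_top) 2
    _ = 6 * ∑' l, {t : ℝ | ENNReal.ofReal (t / 2) < f l}.indicator (fun _ => f l) t := by
        rw [← mul_assoc]; norm_num; rfl

theorem tsum_maximalFn_sq_le (f : ℤ → ℝ≥0∞) :
    ∑' k, maximalFn f k ^ 2 ≤ 24 * ∑' k, f k ^ 2 := by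
  rcases eq_or_ne (∑' k, f k ^ 2) ⊤ with hf | hf
  · simp [hf, ENNReal.mul_top]
  have layer_cake := lintegral_rpow_eq_lintegral_meas_lt_mul Measure.count
    (f := fun k => (maximalFn f k).toReal) (ae_of_all _ fun _ => ENNReal.toReal_nonneg)
    Measurable.of_discrete.aemeasurable two_pos
  have hsq (k : ℤ) : ENNReal.ofReal ((maximalFn f k).toReal ^ (2 : ℝ)) = maximalFn f k ^ 2 := by
    rw [Real.rpow_two, ENNReal.ofReal_pow ENNReal.toReal_nonneg,
      ENNReal.ofReal_toReal (maximalFn_ne_top hf k)]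
  calc ∑' k, maximalFn f k ^ 2
      = ENNReal.ofReal 2 * ∫⁻ t in Ioi 0,
          Measure.count {k | t < (maximalFn f k).toReal} * ENNReal.ofReal (t ^ (2 - 1 : ℝ)) := by
        rw [← layer_cake, lintegral_count]
        exact tsum_congr fun k => (hsq k).symm
    _ ≤ 2 * ∫⁻ t in Ioi 0,
          6 * ∑' l, {t : ℝ | ENNReal.ofReal (t / 2) < f l}.indicator (fun _ => f l) t := by
        rw [ENNReal.ofReal_ofNat]
        refine mul_le_mul_right (setLIntegral_mono' measurableSet_Ioi fun t ht => ?_) 2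
        rw [show (2 - 1 : ℝ) = 1 by norm_num, Real.rpow_one]
        exact count_lt_toReal_maximalFn_mul_le (maximalFn_ne_top hf) (le_of_lt ht)
    _ = 12 * ∑' l, ∫⁻ t in Ioi 0,
          {t : ℝ | ENNReal.ofReal (t / 2) < f l}.indicator (fun _ => f l) t := by
        rw [lintegral_const_mul' _ _ (by simp), lintegral_tsum, ← mul_assoc]
        · norm_num
        · exact fun l => (measurable_const.indicator
            (measurableSet_lt (by fun_prop) measurable_const)).aemeasurable
    _ ≤ 12 * ∑' l, 2 * f l ^ 2 := by
        gcongr with l; exact lintegral_indicator_half_lt_le (f l)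
    _ = 24 * ∑' k, f k ^ 2 := by
        rw [ENNReal.tsum_mul_left, ← mul_assoc]; norm_num

lemma toReal_windowAvg {f : ℤ → ℝ≥0∞} (hf : ∀ l, f l ≠ ⊤) (j : ℕ) (k : ℤ) :
    (windowAvg j f k).toReal
      = (2 * (j : ℝ) + 1)⁻¹ * ∑ l ∈ Finset.Icc (k - j) (k + j), (f l).toReal := by
  rw [windowAvg, ENNReal.toReal_mul, ENNReal.toReal_inv, ENNReal.toReal_sum fun l _ => hf l,
    ENNReal.toReal_natCast]
  push_cast
  rfl

end IntMaximal

lemma ENNReal.tsum_ofReal_sq {ι : Type*} {c : ι → ℝ} (hc : ∀ k, 0 ≤ c k)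
    (hsum : Summable fun k => c k ^ 2) :
    ∑' k, ENNReal.ofReal (c k) ^ 2 = ENNReal.ofReal (∑' k, c k ^ 2) := by
  rw [ENNReal.ofReal_tsum_of_nonneg (fun k => sq_nonneg _) hsum]
  exact tsum_congr fun k => (ENNReal.ofReal_pow (hc k) 2).symm

lemma ENNReal.tsum_toReal_sq {ι : Type*} {f : ι → ℝ≥0∞} (hf : ∑' k, f k ^ 2 ≠ ⊤) :
    ∑' k, (f k).toReal ^ 2 = (∑' k, f k ^ 2).toReal := by
  simp only [← ENNReal.toReal_pow]
  exact (ENNReal.tsum_toReal_eq fun k => ENNReal.ne_top_of_tsum_ne_top hf k).symm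

lemma ENNReal.summable_toReal_sq {ι : Type*} {f : ι → ℝ≥0∞} (hf : ∑' k, f k ^ 2 ≠ ⊤) :
    Summable fun k => (f k).toReal ^ 2 := by
  simpa only [ENNReal.toReal_pow] using ENNReal.summable_toReal hf

open IntMaximal in
theorem exists_admissible_envelope :
    ∃ K : ℝ, 1 ≤ K ∧
      ∀ c0 : ℤ → ℝ, (∀ k, 0 ≤ c0 k) → Summable (fun k => (c0 k) ^ 2) →
        ∃ c : ℤ → ℝ,
          (∀ k, 0 ≤ c k) ∧
          (∀ k, c0 k ≤ c k) ∧
          Summable (fun k => (c k) ^ 2) ∧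
          (∑' k, (c k) ^ 2) ≤ K ^ 2 * ∑' k, (c0 k) ^ 2 ∧
          (∀ (k : ℤ) (j : ℕ),
            (2 * (j : ℝ) + 1)⁻¹ * ∑ l ∈ Finset.Icc (k - (j : ℤ)) (k + (j : ℤ)), c l
              ≤ K * c k) := by
  refine ⟨48, by norm_num, fun c0 hc0 hsum => ?_⟩
  set g := rubioDeFrancia maximalFn 24 fun k => ENNReal.ofReal (c0 k)
  have hg_sq : ∑' k, g k ^ 2 ≤ 8 * ENNReal.ofReal (∑' k, c0 k ^ 2) :=
    ENNReal.tsum_ofReal_sq hc0 hsum ▸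
      tsum_rubioDeFrancia_sq_le (by norm_num) (by norm_num) tsum_maximalFn_sq_le _
  have hg_avg (j : ℕ) (k : ℤ) : windowAvg j g k ≤ 48 * g k :=
    ((windowAvg_le_maximalFn j g k).trans
      (apply_rubioDeFrancia_le (by norm_num) (by norm_num) maximalFn_tsum_mul_le _ k)).trans_eq
        (congrArg (· * g k) (by norm_num))
  have hg_sq_ne_top : ∑' k, g k ^ 2 ≠ ⊤ := ne_top_of_le_ne_top (by finiteness) hg_sq
  have hg_ne_top (k : ℤ) : g k ≠ ⊤ := by
    simpa using ENNReal.ne_top_of_tsum_ne_top hg_sq_ne_top k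
  refine ⟨fun k => (g k).toReal, fun k => ENNReal.toReal_nonneg, fun k => ?_,
    ENNReal.summable_toReal_sq hg_sq_ne_top, ?_, fun k j => ?_⟩
  · simpa [ENNReal.toReal_ofReal (hc0 k)] using
      ENNReal.toReal_mono (hg_ne_top k) (le_rubioDeFrancia _ _ _ k)
  · rw [ENNReal.tsum_toReal_sq hg_sq_ne_top]
    calc (∑' k, g k ^ 2).toReal ≤ (8 * ENNReal.ofReal (∑' k, c0 k ^ 2)).toReal :=
          ENNReal.toReal_mono (by finiteness) hg_sq
      _ ≤ 48 ^ 2 * ∑' k, c0 k ^ 2 := by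
          rw [ENNReal.toReal_mul, ENNReal.toReal_ofReal (tsum_nonneg fun k => sq_nonneg _)]
          gcongr
          norm_num
  · rw [← toReal_windowAvg hg_ne_top]
    simpa [ENNReal.toReal_mul] using ENNReal.toReal_mono (by finiteness [hg_ne_top k]) (hg_avg j k)
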